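/- Let A, B, C each be isomorphic to Z/2 × Z/2, presented as ⟨a₁, a₂ | a₁², a₂², (a₁a₂)²⟩, ⟨b₁, b₂ | b₁², b₂², (b₁b₂)²⟩, and ⟨c₁, c₂ | c₁², c₂², (c₁c₂)²⟩ respectively, and let φ : A * B → C be the homomorphism of the free product determined by φ(a₁) = φ(b₁) = c₁ and φ(a₂) = φ(b₂) = c₂. Then the kernel of φ is a free group of rank 3, generated by x = a₁b₁, y = a₂b₂, and z = a₁a₂b₂a₁. -/

import Mathlib

open Monoid

/-- The Klein four-group `⟨a₁, a₂ ∣ a₁², a₂², (a₁a₂)²⟩ ≅ ℤ/2 × ℤ/2`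
(written multiplicatively). -/
abbrev Klein : Type := Multiplicative (ZMod 2 × ZMod 2)

/-- first generator `a₁` (resp. `b₁`, `c₁`). -/
abbrev kleinGen₁ : Klein := Multiplicative.ofAdd (1, 0)

/-- second generator `a₂` (resp. `b₂`, `c₂`). -/
abbrev kleinGen₂ : Klein := Multiplicative.ofAdd (0, 1)

/-- The homomorphism `φ : A * B → C` of the free product of two Klein four-groups
onto a Klein four-group, sending `a₁, b₁ ↦ c₁` and `a₂, b₂ ↦ c₂`. -/
noncomputable def kleinPhi : Coprod Klein Klein →* Klein :=
  Coprod.lift (MonoidHom.id Klein) (MonoidHom.id Klein)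

namespace KleinAux

abbrev g1 : Klein := kleinGen₁
abbrev g2 : Klein := kleinGen₂
abbrev g3 : Klein := kleinGen₁ * kleinGen₂

abbrev F := FreeGroup (Fin 3)

lemma sq (a : Klein) : a * a = 1 := by revert a; decide
lemma inv_eq (a : Klein) : a⁻¹ = a := by revert a; decide
lemma comm (a b : Klein) : a * b = b * a := by revert a b; decide
lemma klein_cases (a : Klein) : a = 1 ∨ a = g1 ∨ a = g2 ∨ a = g3 := by revert a; decide

/-- `f h` is the free-group generator indexed by `h ∈ Klein \ {1}`, `f 1 = 1`. -/
def f (a : Klein) : F :=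
  if a = g1 then FreeGroup.of 0 else if a = g2 then FreeGroup.of 1
  else if a = g3 then FreeGroup.of 2 else 1

lemma f_one : f 1 = 1 := by
  unfold f; rw [if_neg (by decide), if_neg (by decide), if_neg (by decide)]
lemma f_g1 : f g1 = FreeGroup.of 0 := by unfold f; rw [if_pos rfl]
lemma f_g2 : f g2 = FreeGroup.of 1 := by
  unfold f; rw [if_neg (by decide), if_pos rfl]
lemma f_g3 : f g3 = FreeGroup.of 2 := by
  unfold f; rw [if_neg (by decide), if_neg (by decide), if_pos rfl]

/-- the conjugation action of `Klein` on the kernel's generators. -/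
def sig (a : Klein) : F →* F :=
  FreeGroup.lift ![(f a)⁻¹ * f (a * g1), (f a)⁻¹ * f (a * g2), (f a)⁻¹ * f (a * g3)]

lemma sig_f (a h : Klein) : sig a (f h) = (f a)⁻¹ * f (a * h) := by
  rcases klein_cases h with rfl | rfl | rfl | rfl
  · rw [f_one, map_one, mul_one, inv_mul_cancel]
  · rw [f_g1]; simp [sig]
  · rw [f_g2]; simp [sig]
  · rw [f_g3]; simp [sig]

lemma sig_of0 (a : Klein) : sig a (FreeGroup.of 0) = (f a)⁻¹ * f (a * g1) := by simp [sig]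
lemma sig_of1 (a : Klein) : sig a (FreeGroup.of 1) = (f a)⁻¹ * f (a * g2) := by simp [sig]
lemma sig_of2 (a : Klein) : sig a (FreeGroup.of 2) = (f a)⁻¹ * f (a * g3) := by simp [sig]

lemma sig_comp (a b : Klein) : (sig a).comp (sig b) = sig (a * b) := by
  apply FreeGroup.ext_hom
  intro i
  fin_cases i
  · show sig a (sig b (FreeGroup.of 0)) = sig (a * b) (FreeGroup.of 0)
    rw [sig_of0, map_mul, map_inv, sig_f, sig_f, sig_of0,
      ← mul_assoc a b g1]
    simp [mul_inv_rev, mul_assoc]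
  · show sig a (sig b (FreeGroup.of 1)) = sig (a * b) (FreeGroup.of 1)
    rw [sig_of1, map_mul, map_inv, sig_f, sig_f, sig_of1,
      ← mul_assoc a b g2]
    simp [mul_inv_rev, mul_assoc]
  · show sig a (sig b (FreeGroup.of 2)) = sig (a * b) (FreeGroup.of 2)
    rw [sig_of2, map_mul, map_inv, sig_f, sig_f, sig_of2,
      ← mul_assoc a b g3]
    simp [mul_inv_rev, mul_assoc]

lemma sig_one : sig 1 = MonoidHom.id F := by
  apply FreeGroup.ext_hom
  intro i
  fin_cases i <;> simp [sig, f_one, f_g1, f_g2, f_g3]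

/-- the action as a homomorphism into `MulAut`. -/
def act : Klein →* MulAut F where
  toFun a :=
    { toFun := sig a
      invFun := sig a
      left_inv := fun x => by
        rw [← MonoidHom.comp_apply, sig_comp, sq, sig_one, MonoidHom.id_apply]
      right_inv := fun x => by
        rw [← MonoidHom.comp_apply, sig_comp, sq, sig_one, MonoidHom.id_apply]
      map_mul' := (sig a).map_mul }
  map_one' := by
    ext x
    exact DFunLike.congr_fun sig_one x
  map_mul' a b := by
    ext x
    exact (DFunLike.congr_fun (sig_comp a b) x).symm

lemma act_apply (a : Klein) (x : F) : act a x = sig a x := rfl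

abbrev G := SemidirectProduct F Klein act

open SemidirectProduct in
/-- the right component of `Φ`, sending `b ↦ t_b⁻¹ ⋊ b`. -/
def rmap : Klein →* G where
  toFun a := inl (f a) * inr a
  map_one' := by
    show inl (f 1) * inr 1 = 1
    rw [f_one, map_one, map_one, one_mul]
  map_mul' a b := by
    show inl (f (a * b)) * inr (a * b) = inl (f a) * inr a * (inl (f b) * inr b)
    rw [← mk_eq_inl_mul_inr, ← mk_eq_inl_mul_inr, ← mk_eq_inl_mul_inr, mul_def]
    congr 1
    rw [act_apply, sig_f, mul_inv_cancel_left]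

/-- `Φ : A * B → F ⋊ C`, an isomorphism realizing the kernel decomposition. -/
noncomputable def Phi : Coprod Klein Klein →* G :=
  Coprod.lift SemidirectProduct.inr rmap

lemma Phi_inl (a : Klein) : Phi (Coprod.inl a) = SemidirectProduct.inr a :=
  Coprod.lift_apply_inl _ _ _

lemma Phi_inr (a : Klein) :
    Phi (Coprod.inr a) = SemidirectProduct.inl (f a) * SemidirectProduct.inr a :=
  Coprod.lift_apply_inr _ _ _

/-- `s h = inr h * inl h`, the generators of the kernel inside `A * B`. -/
def s (h : Klein) : Coprod Klein Klein := (Coprod.inr h : Coprod Klein Klein) * Coprod.inl h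

/-- the left component of `Ψ`. -/
def Psi₁ : F →* Coprod Klein Klein := FreeGroup.lift ![s g1, s g2, s g3]

lemma Psi₁_of0 : Psi₁ (FreeGroup.of 0) = s g1 := by simp [Psi₁]
lemma Psi₁_of1 : Psi₁ (FreeGroup.of 1) = s g2 := by simp [Psi₁]
lemma Psi₁_of2 : Psi₁ (FreeGroup.of 2) = s g3 := by simp [Psi₁]

lemma Psi₁_f (h : Klein) : Psi₁ (f h) = s h := by
  rcases klein_cases h with rfl | rfl | rfl | rfl
  · rw [f_one, map_one, s, map_one, map_one, one_mul]
  · rw [f_g1]; simp [Psi₁]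
  · rw [f_g2]; simp [Psi₁]
  · rw [f_g3]; simp [Psi₁]

lemma key (a h : Klein) :
    (s a)⁻¹ * s (a * h) = Coprod.inl a * s h * (Coprod.inl a)⁻¹ := by
  have e1 : Coprod.inr a * Coprod.inr a = (1 : Coprod Klein Klein) := by
    rw [← map_mul, sq, map_one]
  have e2 : (Coprod.inl a : Coprod Klein Klein) * Coprod.inl h = Coprod.inl h * Coprod.inl a := by
    rw [← map_mul, ← map_mul, comm]
  calc (s a)⁻¹ * s (a * h)
      = Coprod.inl a⁻¹ * (((Coprod.inr a⁻¹ : Coprod Klein Klein) * Coprod.inr a) * Coprod.inr h) *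
        (Coprod.inl a * Coprod.inl h) := by
        rw [s, s, mul_inv_rev, map_mul, map_mul, ← map_inv, ← map_inv]
        simp [mul_assoc]
    _ = Coprod.inl a * (Coprod.inr h * (Coprod.inl a * Coprod.inl h)) := by
        rw [inv_eq, ← map_mul, sq, map_one, one_mul, mul_assoc]
    _ = Coprod.inl a * s h * (Coprod.inl a)⁻¹ := by
        rw [s, ← map_inv, inv_eq]
        simp only [mul_assoc]
        rw [e2]

noncomputable def Psi : G →* Coprod Klein Klein :=
  SemidirectProduct.lift Psi₁ Coprod.inl (by
    intro a
    apply FreeGroup.ext_hom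
    intro i
    fin_cases i
    · show Psi₁ (act a (FreeGroup.of 0)) = Coprod.inl a * Psi₁ (FreeGroup.of 0) * (Coprod.inl a)⁻¹
      rw [act_apply, sig_of0, map_mul, map_inv, Psi₁_f, Psi₁_f, key, Psi₁_of0]
    · show Psi₁ (act a (FreeGroup.of 1)) = Coprod.inl a * Psi₁ (FreeGroup.of 1) * (Coprod.inl a)⁻¹
      rw [act_apply, sig_of1, map_mul, map_inv, Psi₁_f, Psi₁_f, key, Psi₁_of1]
    · show Psi₁ (act a (FreeGroup.of 2)) = Coprod.inl a * Psi₁ (FreeGroup.of 2) * (Coprod.inl a)⁻¹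
      rw [act_apply, sig_of2, map_mul, map_inv, Psi₁_f, Psi₁_f, key, Psi₁_of2]
    )

lemma Psi_inl (n : F) : Psi (SemidirectProduct.inl n) = Psi₁ n :=
  SemidirectProduct.lift_inl _ _ _ _

lemma Psi_inr (a : Klein) : Psi (SemidirectProduct.inr a) = Coprod.inl a :=
  SemidirectProduct.lift_inr _ _ _ _

lemma swapSD (g : Klein) (n : F) :
    (SemidirectProduct.inr g : G) * SemidirectProduct.inl n =
      SemidirectProduct.inl (sig g n) * SemidirectProduct.inr g := by
  rw [← act_apply, SemidirectProduct.inl_aut]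
  simp [mul_assoc]

/-- `t h = inl h * inr h`. -/
def tt (h : Klein) : Coprod Klein Klein :=
  (Coprod.inl h : Coprod Klein Klein) * Coprod.inr h

lemma tt_inv (h : Klein) : (tt h)⁻¹ = s h := by
  rw [tt, s, mul_inv_rev, ← map_inv, ← map_inv, inv_eq]

lemma Phi_tt (h : Klein) : Phi (tt h) = SemidirectProduct.inl ((f h)⁻¹) := by
  rw [tt, map_mul, Phi_inl, Phi_inr, ← mul_assoc, swapSD, sig_f, mul_assoc, ← map_mul,
    sq, f_one, mul_one, map_one, mul_one]

/-- the basis of the kernel: `x`, `y`, `z = t₃ * t₁⁻¹`. -/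
noncomputable def ee : F →* Coprod Klein Klein :=
  FreeGroup.lift ![tt g1, tt g2, tt g3 * (tt g1)⁻¹]

lemma ee_of0 : ee (FreeGroup.of 0) = tt g1 := by simp [ee]
lemma ee_of1 : ee (FreeGroup.of 1) = tt g2 := by simp [ee]
lemma ee_of2 : ee (FreeGroup.of 2) = tt g3 * (tt g1)⁻¹ := by simp [ee]

def alpha : F →* F :=
  FreeGroup.lift ![(FreeGroup.of 0)⁻¹, (FreeGroup.of 1)⁻¹, (FreeGroup.of 2)⁻¹ * FreeGroup.of 0]

def beta : F →* F :=
  FreeGroup.lift ![(FreeGroup.of 0)⁻¹, (FreeGroup.of 1)⁻¹, (FreeGroup.of 0)⁻¹ * (FreeGroup.of 2)⁻¹]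

lemma beta_alpha : beta.comp alpha = MonoidHom.id F := by
  apply FreeGroup.ext_hom
  intro i
  fin_cases i
  · show beta (alpha (FreeGroup.of 0)) = FreeGroup.of 0
    simp [alpha, beta]
  · show beta (alpha (FreeGroup.of 1)) = FreeGroup.of 1
    simp [alpha, beta]
  · show beta (alpha (FreeGroup.of 2)) = FreeGroup.of 2
    simp [alpha, beta, mul_assoc]

lemma phi_ee : Phi.comp ee = (SemidirectProduct.inl : F →* G).comp alpha := by
  apply FreeGroup.ext_hom
  intro i
  fin_cases i
  · show Phi (ee (FreeGroup.of 0)) = SemidirectProduct.inl (alpha (FreeGroup.of 0))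
    rw [ee_of0, Phi_tt, f_g1]
    simp [alpha]
  · show Phi (ee (FreeGroup.of 1)) = SemidirectProduct.inl (alpha (FreeGroup.of 1))
    rw [ee_of1, Phi_tt, f_g2]
    simp [alpha]
  · show Phi (ee (FreeGroup.of 2)) = SemidirectProduct.inl (alpha (FreeGroup.of 2))
    rw [ee_of2, map_mul, map_inv, Phi_tt, Phi_tt, f_g1, f_g3]
    simp [alpha]

lemma psiphi : Psi.comp Phi = MonoidHom.id (Coprod Klein Klein) := by
  apply Coprod.hom_ext
  · refine MonoidHom.ext fun a => ?_
    show Psi (Phi (Coprod.inl a)) = Coprod.inl a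
    rw [Phi_inl, Psi_inr]
  · refine MonoidHom.ext fun a => ?_
    show Psi (Phi (Coprod.inr a)) = Coprod.inr a
    rw [Phi_inr, map_mul, Psi_inl, Psi_inr, Psi₁_f, s, mul_assoc, ← map_mul, sq,
      map_one, mul_one]

lemma rightHom_phi : SemidirectProduct.rightHom.comp Phi = kleinPhi := by
  apply Coprod.hom_ext
  · refine MonoidHom.ext fun a => ?_
    show SemidirectProduct.rightHom (Phi (Coprod.inl a)) = kleinPhi (Coprod.inl a)
    rw [Phi_inl, SemidirectProduct.rightHom_inr, kleinPhi, Coprod.lift_apply_inl,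
      MonoidHom.id_apply]
  · refine MonoidHom.ext fun a => ?_
    show SemidirectProduct.rightHom (Phi (Coprod.inr a)) = kleinPhi (Coprod.inr a)
    rw [Phi_inr, map_mul, SemidirectProduct.rightHom_inl, SemidirectProduct.rightHom_inr,
      one_mul, kleinPhi, Coprod.lift_apply_inr, MonoidHom.id_apply]

lemma hbe : Psi.comp (SemidirectProduct.inl : F →* G) = ee.comp beta := by
  apply FreeGroup.ext_hom
  intro i
  fin_cases i
  · show Psi (SemidirectProduct.inl (FreeGroup.of 0)) = ee (beta (FreeGroup.of 0))
    rw [Psi_inl, Psi₁_of0]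
    simp only [beta, FreeGroup.lift_apply_of, Matrix.cons_val_zero, map_inv]
    rw [ee_of0, tt_inv]
  · show Psi (SemidirectProduct.inl (FreeGroup.of 1)) = ee (beta (FreeGroup.of 1))
    rw [Psi_inl, Psi₁_of1]
    simp only [beta, FreeGroup.lift_apply_of, Matrix.cons_val_one, Matrix.head_cons, Matrix.cons_val_zero, map_inv]
    rw [ee_of1, tt_inv]
  · show Psi (SemidirectProduct.inl (FreeGroup.of 2)) = ee (beta (FreeGroup.of 2))
    rw [Psi_inl, Psi₁_of2]
    simp only [beta, FreeGroup.lift_apply_of, map_mul, map_inv, Matrix.cons_val_two,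
      Matrix.tail_cons, Matrix.head_cons, Matrix.cons_val_zero]
    rw [ee_of0, ee_of2, mul_inv_rev, inv_inv, ← mul_assoc, inv_mul_cancel, one_mul, tt_inv]

lemma kphi_tt (h : Klein) : kleinPhi (tt h) = 1 := by
  rw [tt, map_mul, kleinPhi, Coprod.lift_apply_inl, Coprod.lift_apply_inr]
  exact sq h

lemma ker_comp : kleinPhi.comp ee = 1 := by
  apply FreeGroup.ext_hom
  intro i
  fin_cases i
  · show kleinPhi (ee (FreeGroup.of 0)) = 1
    rw [ee_of0, kphi_tt]
  · show kleinPhi (ee (FreeGroup.of 1)) = 1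
    rw [ee_of1, kphi_tt]
  · show kleinPhi (ee (FreeGroup.of 2)) = 1
    rw [ee_of2, map_mul, map_inv, kphi_tt, kphi_tt, one_mul, inv_one]

lemma zz_eq : tt g3 * (tt g1)⁻¹ =
    Coprod.inl g1 * Coprod.inl g2 * Coprod.inr g2 * Coprod.inl g1 := by
  rw [tt_inv, tt, s, ← mul_assoc, mul_assoc _ (Coprod.inr g3), ← map_mul,
    show g3 * g1 = g2 from by decide,
    show (Coprod.inl g1 : Coprod Klein Klein) * Coprod.inl g2 = Coprod.inl g3 from
      (map_mul Coprod.inl g1 g2).symm]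

end KleinAux

open KleinAux

/-- The kernel of `φ : A * B → C` is a free group of rank 3, generated by
`x = a₁b₁`, `y = a₂b₂` and `z = a₁a₂b₂a₁`. -/
theorem kleinPhi_ker_free_rank_three :
    ∃ e : FreeGroup (Fin 3) →* Coprod Klein Klein,
      Function.Injective e ∧
      e.range = kleinPhi.ker ∧
      e (FreeGroup.of 0) = Coprod.inl kleinGen₁ * Coprod.inr kleinGen₁ ∧
      e (FreeGroup.of 1) = Coprod.inl kleinGen₂ * Coprod.inr kleinGen₂ ∧
      e (FreeGroup.of 2) =
        Coprod.inl kleinGen₁ * Coprod.inl kleinGen₂ * Coprod.inr kleinGen₂ *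
          Coprod.inl kleinGen₁ := by
  refine ⟨ee, ?_, ?_, ee_of0, ee_of1, by rw [ee_of2, zz_eq]⟩
  · intro u v huv
    have h1 : (SemidirectProduct.inl (alpha u) : G) = SemidirectProduct.inl (alpha v) := by
      have h := congrArg Phi huv
      rwa [← MonoidHom.comp_apply, ← MonoidHom.comp_apply, phi_ee,
        MonoidHom.comp_apply, MonoidHom.comp_apply] at h
    have h2 : alpha u = alpha v := SemidirectProduct.inl_injective h1
    have h3 := congrArg beta h2
    rwa [← MonoidHom.comp_apply, ← MonoidHom.comp_apply, beta_alpha,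
      MonoidHom.id_apply, MonoidHom.id_apply] at h3
  · apply le_antisymm
    · rintro _ ⟨w, rfl⟩
      show kleinPhi (ee w) = 1
      rw [← MonoidHom.comp_apply, ker_comp]; rfl
    · intro g hg
      have hg' : SemidirectProduct.rightHom (Phi g) = 1 := by
        rw [← MonoidHom.comp_apply, rightHom_phi]; exact hg
      have hmem : Phi g ∈ (SemidirectProduct.inl : F →* G).range := by
        rw [SemidirectProduct.range_inl_eq_ker_rightHom]; exact hg'
      obtain ⟨w, hw⟩ := hmem
      refine ⟨beta w, ?_⟩
      have h4 : ee (beta w) = Psi (Phi g) := by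
        rw [← MonoidHom.comp_apply, ← hbe, MonoidHom.comp_apply, hw]
      rw [h4, ← MonoidHom.comp_apply, psiphi, MonoidHom.id_apply]
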